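/- arXiv:2012.06237 — 5 statements merged into one kernel-verified Lean document; each statement's English description precedes it below -/
import Mathlib

section
/- Let J = L ⋈ R be the natural join of instances L (over attributes A_L) and R (over attributes A_R) with join attributes X = A_L ∩ A_R. For any attribute set A ⊆ A_L \ X and any attribute set B ⊆ A_R \ X: if the functional dependency X → B does NOT hold in J, then the functional dependency A → B does not hold in J either. -/
variable {α V : Type*}

/-- Restriction of a tuple over attribute set `A` to a subset `B`. -/
def restrict {A B : Set α} (h : B ⊆ A) (t : {a // a ∈ A} → V) : {b // b ∈ B} → V :=
  fun b => t ⟨b.1, h b.2⟩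

/-- Two tuples over `A` agree on all attributes of `S`. -/
def AgreeOn {A : Set α} (t1 t2 : {a // a ∈ A} → V) (S : Set α) : Prop :=
  ∀ a : {a // a ∈ A}, a.1 ∈ S → t1 a = t2 a

/-- The functional dependency `S → T` holds in the instance `I`. -/
def FDHolds {A : Set α} (I : Set ({a // a ∈ A} → V)) (S T : Set α) : Prop :=
  ∀ t1 ∈ I, ∀ t2 ∈ I, AgreeOn t1 t2 S → AgreeOn t1 t2 T

/-- Natural join of `L` (over `AL`) and `R` (over `AR`) on `AL ∩ AR`. -/
def Join (AL AR : Set α) (L : Set ({a // a ∈ AL} → V)) (R : Set ({a // a ∈ AR} → V)) :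
    Set ({a // a ∈ AL ∪ AR} → V) :=
  {t | restrict Set.subset_union_left t ∈ L ∧ restrict Set.subset_union_right t ∈ R}

/-!
Given two tuples `t₁, t₂` of `J = L ⋈ R` that agree on `X = A_L ∩ A_R`, the tuple that copies
`t₁` on `A_L` and `t₂` on `A_R \ A_L` is again in `J`. It agrees with `t₁` on `A ⊆ A_L`, so if
`A → B` held it would agree with `t₁` on `B`; since `B` avoids `A_L` it equals `t₂` there.
Hence `A → B` forces `X → B`.
-/

open Classical in
noncomputable def joinGlue {AL AR : Set α} (t₁ t₂ : {a // a ∈ AL ∪ AR} → V) :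
    {a // a ∈ AL ∪ AR} → V :=
  {a | a.1 ∈ AL}.piecewise t₁ t₂

section Glue

variable {AL AR : Set α} {t₁ t₂ : {a // a ∈ AL ∪ AR} → V}

theorem joinGlue_of_mem (a : {a // a ∈ AL ∪ AR}) (ha : a.1 ∈ AL) : joinGlue t₁ t₂ a = t₁ a := by
  classical
  exact Set.piecewise_eq_of_mem _ _ _ ha

theorem joinGlue_of_notMem (a : {a // a ∈ AL ∪ AR}) (ha : a.1 ∉ AL) :
    joinGlue t₁ t₂ a = t₂ a := by
  classical
  exact Set.piecewise_eq_of_notMem _ _ _ ha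

theorem restrict_left_joinGlue :
    restrict Set.subset_union_left (joinGlue t₁ t₂) = restrict Set.subset_union_left t₁ :=
  funext fun a => joinGlue_of_mem _ a.2

theorem restrict_right_joinGlue (h : AgreeOn t₁ t₂ (AL ∩ AR)) :
    restrict Set.subset_union_right (joinGlue t₁ t₂) = restrict Set.subset_union_right t₂ := by
  funext a
  by_cases ha : a.1 ∈ AL
  · exact (joinGlue_of_mem _ ha).trans (h _ ⟨ha, a.2⟩)
  · exact joinGlue_of_notMem _ ha

theorem joinGlue_mem_join {L : Set ({a // a ∈ AL} → V)} {R : Set ({a // a ∈ AR} → V)}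
    (h₁ : t₁ ∈ Join AL AR L R) (h₂ : t₂ ∈ Join AL AR L R) (h : AgreeOn t₁ t₂ (AL ∩ AR)) :
    joinGlue t₁ t₂ ∈ Join AL AR L R := by
  refine ⟨?_, ?_⟩
  · rw [restrict_left_joinGlue]
    exact h₁.1
  · rw [restrict_right_joinGlue h]
    exact h₂.2

theorem agreeOn_joinGlue_left {A : Set α} (hA : A ⊆ AL) : AgreeOn t₁ (joinGlue t₁ t₂) A :=
  fun a haA => (joinGlue_of_mem a (hA haA)).symm

end Glue

theorem FDHolds.inter_of_join {AL AR : Set α} {L : Set ({a // a ∈ AL} → V)}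
    {R : Set ({a // a ∈ AR} → V)} {A B : Set α} (hA : A ⊆ AL) (hB : Disjoint AL B)
    (hFD : FDHolds (Join AL AR L R) A B) : FDHolds (Join AL AR L R) (AL ∩ AR) B := by
  intro t₁ h₁ t₂ h₂ hX a haB
  have h₁₃ := hFD t₁ h₁ _ (joinGlue_mem_join h₁ h₂ hX) (agreeOn_joinGlue_left hA) a haB
  exact h₁₃.trans (joinGlue_of_notMem a (hB.notMem_of_mem_right haB))

/-- If `X → B` fails in the join `J = L ⋈ R` (with `X = A_L ∩ A_R`), then for
`A ⊆ A_L \ X` and `B ⊆ A_R \ X`, the FD `A → B` fails in `J` as well. -/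
theorem not_join_att_implies_not_lhs (AL AR : Set α)
    (L : Set ({a // a ∈ AL} → V)) (R : Set ({a // a ∈ AR} → V))
    (A B : Set α) (hA : A ⊆ AL \ (AL ∩ AR)) (hB : B ⊆ AR \ (AL ∩ AR))
    (h : ¬ FDHolds (Join AL AR L R) (AL ∩ AR) B) :
    ¬ FDHolds (Join AL AR L R) A B := by
  have hAL : A ⊆ AL := hA.trans Set.sdiff_subset
  have hBL : Disjoint AL B :=
    Set.disjoint_right.2 fun _ hb ha => (hB hb).2 ⟨ha, (hB hb).1⟩
  exact fun hFD => h (hFD.inter_of_join hAL hBL)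
end

section
/- Let J = L ⋈ R be the natural join of instances L (over A_L) and R (over A_R) with join attributes X = A_L ∩ A_R. For any A ⊆ A_L, A' ⊆ A_R, and b ∈ A_R: if the functional dependency (A ∪ A') → {b} holds in J, then the functional dependency (X ∪ A') → {b} holds in J. -/
variable {α V : Type*}

/-!
Given `t1, t2` in `L ⋈ R` agreeing on `(A_L ∩ A_R) ∪ A'`, the tuple taking its `A_L`-part from
`t1` and its `A_R`-part from `t2` is well defined (they agree on `A_L ∩ A_R`) and lies in the join.
It agrees with `t1` on `A ⊆ A_L` and with `t2` on `A' ⊆ A_R`, hence with `t1` on `A ∪ A'`; so the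
hypothesis makes it agree with `t1` on `b`, while it agrees with `t2` on `b ∈ A_R`.
-/

namespace AgreeOn

variable {A : Set α} {t1 t2 t3 : {a // a ∈ A} → V} {S T : Set α}

theorem symm (h : AgreeOn t1 t2 S) : AgreeOn t2 t1 S :=
  fun a ha => (h a ha).symm

theorem trans (h12 : AgreeOn t1 t2 S) (h23 : AgreeOn t2 t3 S) : AgreeOn t1 t3 S :=
  fun a ha => (h12 a ha).trans (h23 a ha)

theorem mono (h : AgreeOn t1 t2 S) (hTS : T ⊆ S) : AgreeOn t1 t2 T :=
  fun a ha => h a (hTS ha)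

theorem union (hS : AgreeOn t1 t2 S) (hT : AgreeOn t1 t2 T) : AgreeOn t1 t2 (S ∪ T) :=
  fun a ha => ha.elim (hS a) (hT a)

end AgreeOn

section Glue

variable {AL AR : Set α}

open Classical in
noncomputable def glue (t1 t2 : {a // a ∈ AL ∪ AR} → V) : {a // a ∈ AL ∪ AR} → V :=
  fun a => if a.1 ∈ AL then t1 a else t2 a

variable {t1 t2 : {a // a ∈ AL ∪ AR} → V} {S : Set α}

theorem agreeOn_glue_left (hS : S ⊆ AL) : AgreeOn t1 (glue t1 t2) S :=
  fun a ha => by simp only [glue, if_pos (hS ha)]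

theorem agreeOn_glue_right (h : AgreeOn t1 t2 (AL ∩ AR)) (hS : S ⊆ AR) :
    AgreeOn (glue t1 t2) t2 S := by
  intro a ha
  by_cases hL : a.1 ∈ AL
  · simp only [glue, if_pos hL]
    exact h a ⟨hL, hS ha⟩
  · simp only [glue, if_neg hL]

theorem restrict_glue_left :
    restrict Set.subset_union_left (glue t1 t2) = restrict Set.subset_union_left t1 :=
  funext fun a => (agreeOn_glue_left subset_rfl ⟨a.1, Set.subset_union_left a.2⟩ a.2).symm

theorem restrict_glue_right (h : AgreeOn t1 t2 (AL ∩ AR)) :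
    restrict Set.subset_union_right (glue t1 t2) = restrict Set.subset_union_right t2 :=
  funext fun a => agreeOn_glue_right h subset_rfl ⟨a.1, Set.subset_union_right a.2⟩ a.2

theorem glue_mem_join {L : Set ({a // a ∈ AL} → V)} {R : Set ({a // a ∈ AR} → V)}
    (ht1 : t1 ∈ Join AL AR L R) (ht2 : t2 ∈ Join AL AR L R) (h : AgreeOn t1 t2 (AL ∩ AR)) :
    glue t1 t2 ∈ Join AL AR L R := by
  refine ⟨?_, ?_⟩
  · rw [restrict_glue_left]
    exact ht1.1
  · rw [restrict_glue_right h]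
    exact ht2.2

end Glue

theorem fdHolds_join_inter_union {AL AR : Set α}
    {L : Set ({a // a ∈ AL} → V)} {R : Set ({a // a ∈ AR} → V)} {A A' T : Set α}
    (hA : A ⊆ AL) (hA' : A' ⊆ AR) (hT : T ⊆ AR) (h : FDHolds (Join AL AR L R) (A ∪ A') T) :
    FDHolds (Join AL AR L R) ((AL ∩ AR) ∪ A') T := by
  intro t1 ht1 t2 ht2 hag
  have hX : AgreeOn t1 t2 (AL ∩ AR) := hag.mono Set.subset_union_left
  have hglue : AgreeOn t1 (glue t1 t2) (A ∪ A') :=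
    (agreeOn_glue_left hA).union
      ((hag.mono Set.subset_union_right).trans (agreeOn_glue_right hX hA').symm)
  exact (h t1 ht1 _ (glue_mem_join ht1 ht2 hX) hglue).trans (agreeOn_glue_right hX hT)

/-- If `A ∪ A' → {b}` holds in `J = L ⋈ R` (with `A ⊆ A_L`, `A' ⊆ A_R`, `b ∈ A_R`),
then `X ∪ A' → {b}` holds in `J`, where `X = A_L ∩ A_R`. -/
theorem lhs_replaceable_by_join_attributes (AL AR : Set α)
    (L : Set ({a // a ∈ AL} → V)) (R : Set ({a // a ∈ AR} → V))
    (A A' : Set α) (b : α) (hA : A ⊆ AL) (hA' : A' ⊆ AR) (hb : b ∈ AR)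
    (h : FDHolds (Join AL AR L R) (A ∪ A') {b}) :
    FDHolds (Join AL AR L R) ((AL ∩ AR) ∪ A') {b} := by
  exact fdHolds_join_inter_union hA hA' (Set.singleton_subset_iff.mpr hb) h
end

section
/- There exist finite instances L over attributes {X, A} and R over attributes {X, A', B} such that: (1) every functional dependency holding in L and every functional dependency holding in R is among those generated from the trivial FDs together with {X,A'} → {B} and {X,B} → {A'} by Armstrong's axioms; (2) the FD {A, A'} → {B} holds in the natural join L ⋈ R on X; and (3) {A, A'} → {B} is not derivable by Armstrong's axioms from the union of the FDs holding in L and the FDs holding in R. Concretely, L = {(0,0),(1,0),(1,1),(2,2)} as (X,A)-pairs and R = {(0,0,0),(1,0,0),(1,1,1),(2,1,0)} as (X,A',B)-triples witness this. -/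
/-! Attributes `X, A, A', B` are encoded as `0, 1, 2, 3`.

In `L ⋈ R` the value of `B` equals that of `A'` except on the single joined tuple
`(2, 2, 1, 0)`, the only one with `A = 2`; so `B` is a function of `(A, A')` there.
On the other hand, agreement sets of pairs of tuples show that every FD of `L` is trivial and
that a nontrivial FD of `R` has `X` on its left-hand side and follows from `{X,A'} → {B}` or
`{X,B} → {A'}`. Hence `{A, A'}` is closed under every FD of `L` and of `R`; Armstrong's rules
preserve closedness of a set, so no derivation leads from `{A, A'}` to `B`. -/

variable {α V : Type*}

/-- Armstrong derivability of FDs from a set `F` of FDs. -/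
inductive ArmDeriv {α : Type*} (F : Set (Set α × Set α)) : Set α → Set α → Prop
  | mem (S T : Set α) : (S, T) ∈ F → ArmDeriv F S T
  | refl (S T : Set α) : T ⊆ S → ArmDeriv F S T
  | aug (S T W : Set α) : ArmDeriv F S T → ArmDeriv F (S ∪ W) (T ∪ W)
  | trans (S T U : Set α) : ArmDeriv F S T → ArmDeriv F T U → ArmDeriv F S U

/-- The set of FDs (with attributes inside `U`) holding in the instance `I`. -/
def FDsOver {α V : Type*} {A : Set α} (I : Set ({a // a ∈ A} → V)) (U : Set α) :
    Set (Set α × Set α) :=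
  {p | p.1 ⊆ U ∧ p.2 ⊆ U ∧ FDHolds I p.1 p.2}

section AgreeSet

variable {A : Set α}

def agreeSet (t₁ t₂ : {a // a ∈ A} → V) : Set α :=
  {a | ∃ h : a ∈ A, t₁ ⟨a, h⟩ = t₂ ⟨a, h⟩}

theorem agreeOn_of_subset_agreeSet {t₁ t₂ : {a // a ∈ A} → V} {S : Set α}
    (h : S ⊆ agreeSet t₁ t₂) : AgreeOn t₁ t₂ S :=
  fun _ haS => (h haS).snd

theorem FDHolds.subset_agreeSet {I : Set ({a // a ∈ A} → V)} {S T : Set α}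
    (hST : FDHolds I S T) (hT : T ⊆ A) {t₁ t₂ : {a // a ∈ A} → V} (h₁ : t₁ ∈ I) (h₂ : t₂ ∈ I)
    (hS : S ⊆ agreeSet t₁ t₂) : T ⊆ agreeSet t₁ t₂ :=
  fun a ha => ⟨hT ha, hST t₁ h₁ t₂ h₂ (agreeOn_of_subset_agreeSet hS) ⟨a, hT ha⟩ ha⟩

theorem FDHolds.of_eq_restrict {I : Set ({a // a ∈ A} → V)} {S : Set α} (hS : S ⊆ A)
    {b : α} (hb : b ∈ A) (g : ({a // a ∈ S} → V) → V)
    (h : ∀ t ∈ I, t ⟨b, hb⟩ = g (restrict hS t)) : FDHolds I S {b} := by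
  intro t₁ h₁ t₂ h₂ hag ⟨a, ha⟩ (rfl : a = b)
  have : restrict hS t₁ = restrict hS t₂ := funext fun c => hag _ c.2
  rw [h t₁ h₁, h t₂ h₂, this]

end AgreeSet

namespace ArmDeriv

variable {F : Set (Set α × Set α)}

theorem of_mem_of_subset {P Q S T : Set α} (hPQ : (P, Q) ∈ F) (hP : P ⊆ S) (hT : T ⊆ Q ∪ S) :
    ArmDeriv F S T := by
  have h := aug P Q S (mem P Q hPQ)
  rw [Set.union_eq_self_of_subset_left hP] at h
  exact trans _ _ _ h (refl _ _ hT)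

theorem subset_of_closed {Z S T : Set α} (hF : ∀ p ∈ F, p.1 ⊆ Z → p.2 ⊆ Z)
    (h : ArmDeriv F S T) (hS : S ⊆ Z) : T ⊆ Z := by
  induction h with
  | mem S T h => exact hF _ h hS
  | refl S T h => exact h.trans hS
  | aug S T W _ ih =>
    exact Set.union_subset (ih (Set.subset_union_left.trans hS)) (Set.subset_union_right.trans hS)
  | trans S T U _ _ ih₁ ih₂ => exact ih₂ (ih₁ hS)

end ArmDeriv

def tupleL (x a : ℕ) : {i // i ∈ ({0, 1} : Set (Fin 4))} → ℕ :=
  fun i => if i.1 = 0 then x else a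

def tupleR (x a' b : ℕ) : {i // i ∈ ({0, 2, 3} : Set (Fin 4))} → ℕ :=
  fun i => if i.1 = 0 then x else if i.1 = 2 then a' else b

@[simp] theorem mem_agreeSet_tupleL {x a x' a' : ℕ} {i : Fin 4} :
    i ∈ agreeSet (tupleL x a) (tupleL x' a') ↔ i = 0 ∧ x = x' ∨ i = 1 ∧ a = a' := by
  fin_cases i <;> simp [agreeSet, tupleL]

@[simp] theorem mem_agreeSet_tupleR {x a' b x' a'' b' : ℕ} {i : Fin 4} :
    i ∈ agreeSet (tupleR x a' b) (tupleR x' a'' b') ↔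
      i = 0 ∧ x = x' ∨ i = 2 ∧ a' = a'' ∨ i = 3 ∧ b = b' := by
  fin_cases i <;> simp [agreeSet, tupleR]

def pairsL : Finset (ℕ × ℕ) := {(0, 0), (1, 0), (1, 1), (2, 2)}

def triplesR : Finset (ℕ × ℕ × ℕ) := {(0, 0, 0), (1, 0, 0), (1, 1, 1), (2, 1, 0)}

def witnessL : Set ({i // i ∈ ({0, 1} : Set (Fin 4))} → ℕ) :=
  {t | (t ⟨0, by simp⟩, t ⟨1, by simp⟩) ∈ pairsL}

def witnessR : Set ({i // i ∈ ({0, 2, 3} : Set (Fin 4))} → ℕ) :=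
  {t | (t ⟨0, by simp⟩, t ⟨2, by simp⟩, t ⟨3, by simp⟩) ∈ triplesR}

theorem tupleL_mem_witnessL {x a : ℕ} : tupleL x a ∈ witnessL ↔ (x, a) ∈ pairsL := by
  simp [witnessL, tupleL]

theorem tupleR_mem_witnessR {x a' b : ℕ} : tupleR x a' b ∈ witnessR ↔ (x, a', b) ∈ triplesR := by
  simp [witnessR, tupleR]

theorem witnessL_finite : witnessL.Finite := by
  refine pairsL.finite_toSet.preimage (Function.Injective.injOn fun s t h => ?_)
  funext ⟨i, hi⟩
  rcases hi with rfl | rfl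
  exacts [congrArg Prod.fst h, congrArg Prod.snd h]

theorem witnessR_finite : witnessR.Finite := by
  refine triplesR.finite_toSet.preimage (Function.Injective.injOn fun s t h => ?_)
  simp only [Prod.ext_iff] at h
  funext ⟨i, hi⟩
  rcases hi with rfl | rfl | rfl
  exacts [h.1, h.2.1, h.2.2]

theorem subset_of_mem_fdsOver_witnessL {S T : Set (Fin 4)}
    (h : (S, T) ∈ FDsOver witnessL {0, 1}) : T ⊆ S := by
  obtain ⟨hS, hT, hST⟩ := h
  intro a haT
  by_contra haS
  have l₁ : tupleL 0 0 ∈ witnessL := tupleL_mem_witnessL.2 (by decide)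
  have l₂ : tupleL 1 0 ∈ witnessL := tupleL_mem_witnessL.2 (by decide)
  have l₃ : tupleL 1 1 ∈ witnessL := tupleL_mem_witnessL.2 (by decide)
  rcases hT haT with rfl | rfl
  · simpa using hST.subset_agreeSet hT l₁ l₂
      (fun i hi => by rcases hS hi with rfl | rfl <;> simp_all) haT
  · simpa using hST.subset_agreeSet hT l₂ l₃
      (fun i hi => by rcases hS hi with rfl | rfl <;> simp_all) haT

theorem subset_of_mem_fdsOver_witnessR {S T : Set (Fin 4)}
    (h : (S, T) ∈ FDsOver witnessR {0, 2, 3}) (hXS : 0 ∉ S ∨ 2 ∉ S ∧ 3 ∉ S) : T ⊆ S := by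
  obtain ⟨hS, hT, hST⟩ := h
  intro a haT
  by_contra haS
  have r₁ : tupleR 0 0 0 ∈ witnessR := tupleR_mem_witnessR.2 (by decide)
  have r₂ : tupleR 1 0 0 ∈ witnessR := tupleR_mem_witnessR.2 (by decide)
  have r₃ : tupleR 1 1 1 ∈ witnessR := tupleR_mem_witnessR.2 (by decide)
  have r₄ : tupleR 2 1 0 ∈ witnessR := tupleR_mem_witnessR.2 (by decide)
  rcases hT haT with rfl | rfl | rfl
  · simpa using hST.subset_agreeSet hT r₁ r₂
        (fun i hi => by rcases hS hi with rfl | rfl | rfl <;> simp_all) haT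
  · rcases hXS with h0 | ⟨-, h3⟩
    · simpa using hST.subset_agreeSet hT r₂ r₄
        (fun i hi => by rcases hS hi with rfl | rfl | rfl <;> simp_all) haT
    · simpa using hST.subset_agreeSet hT r₂ r₃
        (fun i hi => by rcases hS hi with rfl | rfl | rfl <;> simp_all) haT
  · rcases hXS with h0 | ⟨h2, -⟩
    · simpa using hST.subset_agreeSet hT r₃ r₄
        (fun i hi => by rcases hS hi with rfl | rfl | rfl <;> simp_all) haT
    · simpa using hST.subset_agreeSet hT r₂ r₃
        (fun i hi => by rcases hS hi with rfl | rfl | rfl <;> simp_all) haT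

theorem apply_three_of_mem_join {t : {a // a ∈ ({0, 1} : Set (Fin 4)) ∪ {0, 2, 3}} → ℕ}
    (ht : t ∈ Join {0, 1} {0, 2, 3} witnessL witnessR) :
    t ⟨3, by simp⟩ = if t ⟨1, by simp⟩ = 2 then 0 else t ⟨2, by simp⟩ := by
  have key : ∀ p ∈ pairsL, ∀ q ∈ triplesR, p.1 = q.1 → q.2.2 = if p.2 = 2 then 0 else q.2.1 := by
    decide
  exact key _ ht.1 _ ht.2 rfl

theorem armDeriv_of_mem_fdsOver_witnessR {F : Set (Set (Fin 4) × Set (Fin 4))}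
    (h₁ : ({0, 2}, {3}) ∈ F) (h₂ : ({0, 3}, {2}) ∈ F) {S T : Set (Fin 4)}
    (h : (S, T) ∈ FDsOver witnessR {0, 2, 3}) : ArmDeriv F S T := by
  have hT : T ⊆ {0, 2, 3} := h.2.1
  by_cases h02 : 0 ∈ S ∧ 2 ∈ S
  · refine .of_mem_of_subset h₁ (by simp [Set.insert_subset_iff, h02]) fun i hi => ?_
    rcases hT hi with rfl | rfl | rfl <;> simp_all
  by_cases h03 : 0 ∈ S ∧ 3 ∈ S
  · refine .of_mem_of_subset h₂ (by simp [Set.insert_subset_iff, h03]) fun i hi => ?_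
    rcases hT hi with rfl | rfl | rfl <;> simp_all
  exact .refl _ _ (subset_of_mem_fdsOver_witnessR h (by tauto))

theorem fdHolds_join_witness :
    FDHolds (Join {0, 1} {0, 2, 3} witnessL witnessR) ({1, 2} : Set (Fin 4)) {3} :=
  FDHolds.of_eq_restrict (by intro i; simp; omega) (by simp)
    (fun u => if u ⟨1, by simp⟩ = 2 then 0 else u ⟨2, by simp⟩)
    fun _ ht => apply_three_of_mem_join ht

theorem not_armDeriv_union_fdsOver_witness :
    ¬ ArmDeriv (FDsOver witnessL {0, 1} ∪ FDsOver witnessR {0, 2, 3})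
      ({1, 2} : Set (Fin 4)) {3} := by
  intro h
  have hclosed : ∀ p ∈ FDsOver witnessL {0, 1} ∪ FDsOver witnessR {0, 2, 3},
      p.1 ⊆ ({1, 2} : Set (Fin 4)) → p.2 ⊆ {1, 2} := by
    rintro ⟨S, T⟩ (hp | hp) hS
    · exact (subset_of_mem_fdsOver_witnessL hp).trans hS
    · exact (subset_of_mem_fdsOver_witnessR hp (.inl fun h0 => by simpa using hS h0)).trans hS
  simpa using h.subset_of_closed hclosed le_rfl (Set.mem_singleton 3)

/-- Attributes: `X = 0`, `A = 1`, `A' = 2`, `B = 3`. There are finite instances `L`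
over `{X, A}` and `R` over `{X, A', B}` such that every FD holding in `L` or in `R`
is Armstrong-derivable from `{X,A'} → {B}` and `{X,B} → {A'}` (together with the
trivial FDs, built into `ArmDeriv.refl`), the FD `{A, A'} → {B}` holds in the
natural join `L ⋈ R`, yet it is not Armstrong-derivable from the union of the FDs
holding in `L` and in `R`. Witness: `L = {(0,0),(1,0),(1,1),(2,2)}` as `(X,A)`-pairs
and `R = {(0,0,0),(1,0,0),(1,1,1),(2,1,0)}` as `(X,A',B)`-triples. -/
theorem join_fd_not_armstrong_inferable :
    ∃ (L : Set ({a // a ∈ ({0, 1} : Set (Fin 4))} → ℕ))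
      (R : Set ({a // a ∈ ({0, 2, 3} : Set (Fin 4))} → ℕ)),
      L.Finite ∧ R.Finite ∧
      (∀ p ∈ FDsOver L ({0, 1} : Set (Fin 4)),
        ArmDeriv ({((({0, 2} : Set (Fin 4)), ({3} : Set (Fin 4)))),
                   ((({0, 3} : Set (Fin 4)), ({2} : Set (Fin 4))))} :
            Set (Set (Fin 4) × Set (Fin 4))) p.1 p.2) ∧
      (∀ p ∈ FDsOver R ({0, 2, 3} : Set (Fin 4)),
        ArmDeriv ({((({0, 2} : Set (Fin 4)), ({3} : Set (Fin 4)))),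
                   ((({0, 3} : Set (Fin 4)), ({2} : Set (Fin 4))))} :
            Set (Set (Fin 4) × Set (Fin 4))) p.1 p.2) ∧
      FDHolds (Join {0, 1} {0, 2, 3} L R) ({1, 2} : Set (Fin 4)) ({3} : Set (Fin 4)) ∧
      ¬ ArmDeriv (FDsOver L ({0, 1} : Set (Fin 4)) ∪ FDsOver R ({0, 2, 3} : Set (Fin 4)))
          ({1, 2} : Set (Fin 4)) ({3} : Set (Fin 4)) := by
  refine ⟨witnessL, witnessR, witnessL_finite, witnessR_finite,
    fun p hp => .refl _ _ (subset_of_mem_fdsOver_witnessL hp),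
    fun p hp => armDeriv_of_mem_fdsOver_witnessR (by simp) (by simp) hp,
    fdHolds_join_witness, not_armDeriv_union_fdsOver_witness⟩
end

section
/- If instance L over A_L satisfies FD S → {x} for every x ∈ X (where X = A_L ∩ A_R) and instance R over A_R satisfies X → T for T ⊆ A_R, then the natural join J = L ⋈ R satisfies S → T, for any S ⊆ A_L. -/
/-!
Armstrong's axioms inside the join: the union rule turns the premises on `L` into `S → X`,
and restricting join tuples to `A_L` resp. `A_R` transports `S → X` and `X → T` to the join,
where transitivity through `X` gives `S → T`.
-/

variable {α V : Type*}

section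

variable {A B S T X : Set α}

theorem AgreeOn.restrict {t1 t2 : {a // a ∈ A} → V} (h : B ⊆ A) (hS : AgreeOn t1 t2 S) :
    AgreeOn (_root_.restrict h t1) (_root_.restrict h t2) S :=
  fun b hb => hS ⟨b.1, h b.2⟩ hb

theorem AgreeOn.of_restrict {t1 t2 : {a // a ∈ A} → V} (h : B ⊆ A) (hS : S ⊆ B)
    (hr : AgreeOn (_root_.restrict h t1) (_root_.restrict h t2) S) : AgreeOn t1 t2 S :=
  fun a ha => hr ⟨a.1, hS ha⟩ ha

theorem FDHolds.mono {I J : Set ({a // a ∈ A} → V)} (hJI : J ⊆ I) (hI : FDHolds I S T) :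
    FDHolds J S T :=
  fun t1 h1 t2 h2 => hI t1 (hJI h1) t2 (hJI h2)

theorem FDHolds.preimage_restrict {I : Set ({b // b ∈ B} → V)} (h : B ⊆ A) (hT : T ⊆ B)
    (hI : FDHolds I S T) : FDHolds {t : {a // a ∈ A} → V | restrict h t ∈ I} S T :=
  fun _ h1 _ h2 hS => AgreeOn.of_restrict h hT (hI _ h1 _ h2 (hS.restrict h))

theorem FDHolds.trans {I : Set ({a // a ∈ A} → V)} (hSX : FDHolds I S X)
    (hXT : FDHolds I X T) : FDHolds I S T :=
  fun t1 h1 t2 h2 hS => hXT t1 h1 t2 h2 (hSX t1 h1 t2 h2 hS)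

theorem FDHolds.of_forall_singleton {I : Set ({a // a ∈ A} → V)}
    (h : ∀ x ∈ X, FDHolds I S {x}) : FDHolds I S X :=
  fun t1 h1 t2 h2 hS a ha => h a.1 ha t1 h1 t2 h2 hS a rfl

end

theorem inferred_join_fd_general (AL AR : Set α)
    (L : Set ({a // a ∈ AL} → V)) (R : Set ({a // a ∈ AR} → V))
    (S T : Set α) (hT : T ⊆ AR)
    (hL : ∀ x ∈ AL ∩ AR, FDHolds L S {x})
    (hR : FDHolds R (AL ∩ AR) T) :
    FDHolds (Join AL AR L R) S T := by
  have hSX : FDHolds (Join AL AR L R) S (AL ∩ AR) :=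
    ((FDHolds.of_forall_singleton hL).preimage_restrict Set.subset_union_left
      Set.inter_subset_left).mono fun _ ht => ht.1
  have hXT : FDHolds (Join AL AR L R) (AL ∩ AR) T :=
    (hR.preimage_restrict Set.subset_union_right hT).mono fun _ ht => ht.2
  exact hSX.trans hXT

/-- If `L` satisfies `S → {x}` for each join attribute `x ∈ X = A_L ∩ A_R` and `R`
satisfies `X → T`, then the natural join satisfies `S → T`. -/
theorem inferred_join_fd (AL AR : Set α)
    (L : Set ({a // a ∈ AL} → V)) (R : Set ({a // a ∈ AR} → V))
    (S T : Set α) (hS : S ⊆ AL) (hT : T ⊆ AR)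
    (hL : ∀ x ∈ AL ∩ AR, FDHolds L S {x})
    (hR : FDHolds R (AL ∩ AR) T) :
    FDHolds (Join AL AR L R) S T :=
  inferred_join_fd_general AL AR L R S T hT hL hR
end

section
/- Let J = L ⋈ R on X, let A ⊆ A_L \ X and B ⊆ A_R \ X, and suppose the FD A → B holds in J. Then for any t ∈ J and any tuple r ∈ R with r|X = t|X, the combined tuple (t|A_L joined with r) lies in J and agrees with t on A, hence agrees with t on B. Consequently, X → B holds on the sub-instance of R consisting of the tuples whose X-values appear in π_X(L). -/
variable {α V : Type*}

open Classical
noncomputable def combine (AL AR : Set α) (l : {a // a ∈ AL} → V) (r : {a // a ∈ AR} → V) :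
    {a // a ∈ AL ∪ AR} → V :=
  fun a => if h : a.1 ∈ AL then l ⟨a.1, h⟩ else r ⟨a.1, a.2.resolve_left h⟩

lemma combine_left (AL AR : Set α) (l : {a // a ∈ AL} → V) (r : {a // a ∈ AR} → V) :
    restrict Set.subset_union_left (combine AL AR l r) = l := by
  funext a; simp [restrict, combine, a.2]

lemma combine_right (AL AR : Set α) (l : {a // a ∈ AL} → V) (r : {a // a ∈ AR} → V)
    (hagree : ∀ a : α, (ha : a ∈ AL) → (hr : a ∈ AR) → l ⟨a, ha⟩ = r ⟨a, hr⟩) :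
    restrict Set.subset_union_right (combine AL AR l r) = r := by
  funext a
  simp only [restrict, combine]
  split
  · exact hagree a.1 _ a.2
  · rfl

/-- If `A → B` holds in `J = L ⋈ R` with `A ⊆ A_L \ X` and `B ⊆ A_R \ X`, then
`X → B` holds in the right semi-join `R' = {r ∈ R | r|X ∈ π_X(L)}`. -/
theorem lhs_fd_forces_join_attribute_fd (AL AR : Set α)
    (L : Set ({a // a ∈ AL} → V)) (R : Set ({a // a ∈ AR} → V))
    (A B : Set α) (hA : A ⊆ AL \ (AL ∩ AR)) (hB : B ⊆ AR \ (AL ∩ AR))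
    (h : FDHolds (Join AL AR L R) A B) :
    FDHolds {r ∈ R | restrict (Set.inter_subset_right : AL ∩ AR ⊆ AR) r ∈
        restrict (Set.inter_subset_left : AL ∩ AR ⊆ AL) '' L} (AL ∩ AR) B := by
  rintro r1 ⟨hr1R, l, hlL, hl1⟩ r2 ⟨hr2R, -⟩ hX b hb
  -- l agrees with r1 on X, and r1 agrees with r2 on X, so l agrees with r2 on X.
  have hagree1 : ∀ a : α, (ha : a ∈ AL) → (hr : a ∈ AR) → l ⟨a, ha⟩ = r1 ⟨a, hr⟩ := by
    intro a ha hr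
    have := congrFun hl1 ⟨a, ⟨ha, hr⟩⟩
    simpa [restrict] using this
  have hagree2 : ∀ a : α, (ha : a ∈ AL) → (hr : a ∈ AR) → l ⟨a, ha⟩ = r2 ⟨a, hr⟩ := by
    intro a ha hr
    rw [hagree1 a ha hr]
    exact hX ⟨a, hr⟩ ⟨ha, hr⟩
  have h1 : combine AL AR l r1 ∈ Join AL AR L R := by
    constructor
    · rw [combine_left]; exact hlL
    · rw [combine_right AL AR l r1 hagree1]; exact hr1R
  have h2 : combine AL AR l r2 ∈ Join AL AR L R := by
    constructor
    · rw [combine_left]; exact hlL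
    · rw [combine_right AL AR l r2 hagree2]; exact hr2R
  have hAgA : AgreeOn (combine AL AR l r1) (combine AL AR l r2) A := by
    intro a ha
    have haL : a.1 ∈ AL := (hA ha).1
    simp [combine, haL]
  have hAgB := h _ h1 _ h2 hAgA
  have hbAR : b.1 ∈ AR := (hB hb).1
  have hbAL : b.1 ∉ AL := fun hbAL => (hB hb).2 ⟨hbAL, hbAR⟩
  have := hAgB ⟨b.1, Or.inr hbAR⟩ hb
  simpa [combine, hbAL, Subtype.coe_eta] using this
end
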